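/- Let ρ : T → S be a guarded retraction between guarded monads, witnessed by a family υ_X : SX → TX, and suppose T is guarded pre-iterative with iteration operator (-)†. Then S is guarded pre-iterative with the iteration operator f‡ = ρ ∘ (υ∘f)†; that is, for every inr-guarded f : X → S(Y+X), the morphism ρ∘(υ∘f)† satisfies the fixpoint identity ρ∘(υ∘f)† = [η, ρ∘(υ∘f)†]* ∘ f. -/

import Mathlib

open CategoryTheory CategoryTheory.Limits

universe v u

/-- `(σ, σ')` form a binary coproduct cospan, i.e. a summand together with its complement. -/
def IsCoprodCospan {C : Type u} [Category.{v} C] {Y' Y'' Y : C}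
    (σ : Y' ⟶ Y) (σ' : Y'' ⟶ Y) : Prop :=
  Nonempty (IsColimit (BinaryCofan.mk σ σ'))

/-- A monad on `C`, presented as a Kleisli triple. -/
structure KMonad (C : Type u) [Category.{v} C] where
  obj : C → C
  η : ∀ X : C, X ⟶ obj X
  bind : ∀ {X Y : C}, (X ⟶ obj Y) → (obj X ⟶ obj Y)
  η_bind : ∀ {X Y : C} (f : X ⟶ obj Y), η X ≫ bind f = f
  bind_η : ∀ X : C, bind (η X) = 𝟙 (obj X)
  bind_comp : ∀ {X Y Z : C} (f : X ⟶ obj Y) (g : Y ⟶ obj Z),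
      bind (f ≫ bind g) = bind f ≫ bind g

/-- An abstractly guarded monad: its Kleisli category carries a notion of abstract
guardedness, i.e. a relation `guarded f σ σ'` between Kleisli morphisms
`f : X ⟶ obj Y` and summands `σ : Y' ⟶ Y` (with chosen complement `σ' : Y'' ⟶ Y`)
closed under the rules (trv), (par) and (cmp), where the coproducts in the Kleisli
category are inherited from `C` (with injections `η ∘ inj`). -/
structure GMonad (C : Type u) [Category.{v} C] extends KMonad C where
  guarded : ∀ {X Y' Y'' Y : C}, (X ⟶ obj Y) → (Y' ⟶ Y) → (Y'' ⟶ Y) → Prop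
  trv : ∀ {X Y Z P : C} (i₁ : Y ⟶ P) (i₂ : Z ⟶ P), IsCoprodCospan i₁ i₂ →
      ∀ f : X ⟶ obj Y, guarded (f ≫ bind (i₁ ≫ η P)) i₂ i₁
  par : ∀ {X Y P Z' Z'' Z : C} (j₁ : X ⟶ P) (j₂ : Y ⟶ P), IsCoprodCospan j₁ j₂ →
      ∀ (σ : Z' ⟶ Z) (σ' : Z'' ⟶ Z) (u : P ⟶ obj Z),
      guarded (j₁ ≫ u) σ σ' → guarded (j₂ ≫ u) σ σ' → guarded u σ σ'
  cmp : ∀ {X Y Z P V' V'' V : C} (i₁ : Y ⟶ P) (i₂ : Z ⟶ P), IsCoprodCospan i₁ i₂ →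
      ∀ (σ : V' ⟶ V) (σ' : V'' ⟶ V) (f : X ⟶ obj P) (u : P ⟶ obj V),
      guarded f i₂ i₁ → guarded (i₁ ≫ u) σ σ' → guarded (f ≫ bind u) σ σ'

/-- A guarded pre-iterative monad: every `inr`-guarded `f : X ⟶ T(Y+X)` has a chosen
solution `iter f hf` satisfying the fixpoint identity `f† = [η, f†]* ∘ f`. -/
structure PIMonad (C : Type u) [Category.{v} C] [HasBinaryCoproducts C]
    extends GMonad C where
  iter : ∀ {X Y : C} (f : X ⟶ obj (Y ⨿ X)),
      guarded f (coprod.inr : X ⟶ Y ⨿ X) coprod.inl → (X ⟶ obj Y)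
  iter_fixpoint : ∀ {X Y : C} (f : X ⟶ obj (Y ⨿ X))
      (hf : guarded f (coprod.inr : X ⟶ Y ⨿ X) coprod.inl),
      iter f hf = f ≫ bind (coprod.desc (η Y) (iter f hf))

/-- A guarded iterative monad: solutions of `inr`-guarded morphisms are unique. -/
structure IMonad (C : Type u) [Category.{v} C] [HasBinaryCoproducts C]
    extends PIMonad C where
  iter_unique : ∀ {X Y : C} (f : X ⟶ obj (Y ⨿ X))
      (hf : guarded f (coprod.inr : X ⟶ Y ⨿ X) coprod.inl) (s : X ⟶ obj Y),
      s = f ≫ bind (coprod.desc (η Y) s) → s = iter f hf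

/-- A monad morphism, in Kleisli-triple form. -/
structure KMonadHom {C : Type u} [Category.{v} C] (T S : KMonad C) where
  app : ∀ X : C, T.obj X ⟶ S.obj X
  app_η : ∀ X : C, T.η X ≫ app X = S.η X
  app_bind : ∀ (X Y : C) (f : X ⟶ T.obj Y),
      T.bind f ≫ app Y = app X ≫ S.bind (f ≫ app Y)

theorem KMonadHom.desc_η_comp_app {C : Type u} [Category.{v} C] {T S : KMonad C}
    (ρ : KMonadHom T S) {Y Z : C} [HasBinaryCoproduct Y Z] (g : Z ⟶ T.obj Y) :
    coprod.desc (T.η Y) g ≫ ρ.app Y = coprod.desc (S.η Y) (g ≫ ρ.app Y) := by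
  ext <;> simp [ρ.app_η]

theorem PIMonad.iter_comp_app {C : Type u} [Category.{v} C] [HasBinaryCoproducts C]
    (T : PIMonad C) {S : KMonad C} (ρ : KMonadHom T.toKMonad S) {X Y : C}
    {g : X ⟶ T.obj (Y ⨿ X)} (hg : T.guarded g (coprod.inr : X ⟶ Y ⨿ X) coprod.inl) :
    T.iter g hg ≫ ρ.app Y =
      g ≫ ρ.app (Y ⨿ X) ≫ S.bind (coprod.desc (S.η Y) (T.iter g hg ≫ ρ.app Y)) :=
  calc T.iter g hg ≫ ρ.app Y
      = g ≫ T.bind (coprod.desc (T.η Y) (T.iter g hg)) ≫ ρ.app Y := by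
        rw [← Category.assoc, ← T.iter_fixpoint]
    _ = g ≫ ρ.app (Y ⨿ X) ≫ S.bind (coprod.desc (S.η Y) (T.iter g hg ≫ ρ.app Y)) := by
        rw [ρ.app_bind, ρ.desc_η_comp_app]

theorem guarded_retraction_transfers_iteration {C : Type u} [Category.{v} C]
    [HasBinaryCoproducts C] (T : PIMonad C) (S : GMonad C)
    (ρ : KMonadHom T.toKMonad S.toKMonad)
    (υ : ∀ X : C, S.obj X ⟶ T.obj X)
    (hυ : ∀ (X Y' Y'' Y : C) (f : X ⟶ S.obj Y) (σ : Y' ⟶ Y) (σ' : Y'' ⟶ Y),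
        S.guarded f σ σ' → T.guarded (f ≫ υ Y) σ σ')
    (hρυ : ∀ X : C, υ X ≫ ρ.app X = 𝟙 (S.obj X))
    (X Y : C) (f : X ⟶ S.obj (Y ⨿ X))
    (hf : S.guarded f (coprod.inr : X ⟶ Y ⨿ X) coprod.inl) :
    T.iter (f ≫ υ (Y ⨿ X)) (hυ X X Y (Y ⨿ X) f coprod.inr coprod.inl hf) ≫ ρ.app Y =
      f ≫ S.bind (coprod.desc (S.η Y)
        (T.iter (f ≫ υ (Y ⨿ X)) (hυ X X Y (Y ⨿ X) f coprod.inr coprod.inl hf) ≫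
          ρ.app Y)) := by
  refine (T.iter_comp_app ρ _).trans ?_
  rw [← Category.assoc, Category.assoc f, hρυ, Category.comp_id]
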